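/- arXiv:2502.06523 — 5 statements merged into one kernel-verified Lean document; each statement's English description precedes it below -/
import Mathlib

section
/- For every function Q : Δ(S) × A → ℝ and every a ∈ A, the map b ↦ H_TIB Q(b,a) is convex on Δ(S): for all beliefs b₁, b₂ and λ ∈ [0,1], H_TIB Q(λb₁+(1−λ)b₂, a) ≤ λ·H_TIB Q(b₁,a) + (1−λ)·H_TIB Q(b₂,a). Consequently, any fixed point Q of H_TIB (Q = H_TIB Q) is convex in the belief. -/
open Finset
open scoped Classical

set_option linter.unusedSectionVars false

/-- A belief (probability distribution) over a finite state space `S`. -/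
structure Belief (S : Type*) [Fintype S] where
  val : S → ℝ
  nonneg : ∀ s, 0 ≤ val s
  sum_one : ∑ s, val s = 1

/-- The convex combination `l • b₁ + (1-l) • b₂` of two beliefs. -/
noncomputable def Belief.mix {S : Type*} [Fintype S] (b₁ b₂ : Belief S) (l : ℝ)
    (h0 : 0 ≤ l) (h1 : l ≤ 1) : Belief S where
  val s := l * b₁.val s + (1 - l) * b₂.val s
  nonneg s := add_nonneg (mul_nonneg h0 (b₁.nonneg s))
    (mul_nonneg (by linarith) (b₂.nonneg s))
  sum_one := by
    rw [Finset.sum_add_distrib, ← Finset.mul_sum, ← Finset.mul_sum, b₁.sum_one, b₂.sum_one]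
    ring

/-- `Q : Δ(S) × A → ℝ` is convex in the belief. -/
def ConvexInBelief {S A : Type*} [Fintype S] (Q : Belief S → A → ℝ) : Prop :=
  ∀ (a : A) (b₁ b₂ : Belief S) (l : ℝ) (h0 : 0 ≤ l) (h1 : l ≤ 1),
    Q (Belief.mix b₁ b₂ l h0 h1) a ≤ l * Q b₁ a + (1 - l) * Q b₂ a

/-- A finite POMDP: transition function `T s a s' = T(s'|s,a)`, observation function
`Z a s' o = Ω(o|a,s')`, rewards `R`, discount `γ ∈ (0,1)`. -/
structure POMDP (S A O : Type*) [Fintype S] [Fintype A] [Fintype O] where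
  T : S → A → S → ℝ
  T_nonneg : ∀ s a s', 0 ≤ T s a s'
  T_sum_one : ∀ s a, ∑ s', T s a s' = 1
  Z : A → S → O → ℝ
  Z_nonneg : ∀ a s' o, 0 ≤ Z a s' o
  Z_sum_one : ∀ a s', ∑ o, Z a s' o = 1
  R : S → A → ℝ
  γ : ℝ
  γ_pos : 0 < γ
  γ_lt_one : γ < 1

namespace POMDP

variable {S A O : Type*} [Fintype S] [Fintype A] [Fintype O] [Nonempty S] [Nonempty A]
  [Nonempty O]
variable (M : POMDP S A O)

/-- `Pr(s',o|s,a)` -/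
def prSO (s : S) (a : A) (s' : S) (o : O) : ℝ := M.Z a s' o * M.T s a s'

lemma prSO_nonneg (s : S) (a : A) (s' : S) (o : O) : 0 ≤ M.prSO s a s' o :=
  mul_nonneg (M.Z_nonneg a s' o) (M.T_nonneg s a s')

/-- `Pr(o|s,a)` -/
def prO (s : S) (a : A) (o : O) : ℝ := ∑ s', M.prSO s a s' o

/-- `Pr(s',o|b,a)` -/
def bprSO (b : Belief S) (a : A) (s' : S) (o : O) : ℝ := ∑ s, b.val s * M.prSO s a s' o

lemma bprSO_nonneg (b : Belief S) (a : A) (s' : S) (o : O) : 0 ≤ M.bprSO b a s' o :=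
  Finset.sum_nonneg fun s _ => mul_nonneg (b.nonneg s) (M.prSO_nonneg s a s' o)

/-- `Pr(o|b,a)` -/
def bprO (b : Belief S) (a : A) (o : O) : ℝ := ∑ s', M.bprSO b a s' o

/-- The unit belief `δ_s`. -/
noncomputable def unit (s : S) : Belief S where
  val s' := if s' = s then 1 else 0
  nonneg s' := by by_cases h : s' = s <;> simp [h]
  sum_one := by simp

/-- The posterior belief `b_{b,a,o}`, defined when `Pr(o|b,a) > 0`. -/
noncomputable def post (b : Belief S) (a : A) (o : O) (h : 0 < M.bprO b a o) : Belief S where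
  val s' := M.bprSO b a s' o / M.bprO b a o
  nonneg s' := div_nonneg (M.bprSO_nonneg b a s' o) h.le
  sum_one := by
    rw [← Finset.sum_div]
    exact div_self (ne_of_gt h)

/-- The one-step belief `b_{s,a,o} = b_{δ_s,a,o}`, defined when `Pr(o|s,a) > 0`. -/
noncomputable def osb (s : S) (a : A) (o : O) (h : 0 < M.prO s a o) : Belief S where
  val s' := M.prSO s a s' o / M.prO s a o
  nonneg s' := div_nonneg (M.prSO_nonneg s a s' o) h.le
  sum_one := by
    unfold prO
    rw [← Finset.sum_div]
    exact div_self (ne_of_gt h)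

/-- Expected reward `R(b,a)`. -/
noncomputable def expR (b : Belief S) (a : A) : ℝ := ∑ s, b.val s * M.R s a

/-- The fast informed bound operator `H_FIB`. -/
noncomputable def HFIB (Q : Belief S → A → ℝ) (b : Belief S) (a : A) : ℝ :=
  M.expR b a + M.γ * ∑ o, Finset.univ.sup' Finset.univ_nonempty
    (fun a' => ∑ s', M.bprSO b a s' o * Q (unit s') a')

/-- The tighter informed bound operator `H_TIB`. -/
noncomputable def HTIB (Q : Belief S → A → ℝ) (b : Belief S) (a : A) : ℝ :=
  M.expR b a + M.γ * ∑ o, Finset.univ.sup' Finset.univ_nonempty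
    (fun a' => ∑ s, if h : 0 < M.prO s a o then
      b.val s * M.prO s a o * Q (M.osb s a o h) a' else 0)

/-- The optimal Bellman operator `H_POMDP`. -/
noncomputable def HPOMDP (Q : Belief S → A → ℝ) (b : Belief S) (a : A) : ℝ :=
  M.expR b a + M.γ * ∑ o, if h : 0 < M.bprO b a o then
    M.bprO b a o * Finset.univ.sup' Finset.univ_nonempty (fun a' => Q (M.post b a o h) a')
  else 0

/-- Index type for the family `B_SAO`: `none` indexes the initial belief `b₀`,
`some (s,a,o)` (with `Pr(o|s,a) > 0`) indexes the one-step belief `b_{s,a,o}`. -/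
abbrev OSIdx : Type _ := Option {x : S × A × O // 0 < M.prO x.1 x.2.1 x.2.2}

/-- The member of the family `B_SAO` (with initial belief `b₀`) at a given index. -/
noncomputable def member (b₀ : Belief S) : M.OSIdx → Belief S
  | none => b₀
  | some x => M.osb x.1.1 x.1.2.1 x.1.2.2 x.2

/-- `w` is a weight function for the belief `tgt` over the family `B_SAO`. -/
def IsWeight (b₀ : Belief S) (tgt : Belief S) (w : M.OSIdx → ℝ) : Prop :=
  (∀ i, 0 ≤ w i) ∧ ∀ s, ∑ i, w i * (M.member b₀ i).val s = tgt.val s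

/-- The optimized tighter informed bound operator `H_OTIB`. -/
noncomputable def HOTIB (b₀ : Belief S) (Q : Belief S → A → ℝ) (b : Belief S) (a : A) : ℝ :=
  M.expR b a + M.γ * ∑ o, if h : 0 < M.bprO b a o then
    Finset.univ.sup' Finset.univ_nonempty (fun a' =>
      M.bprO b a o * ⨅ w : {w : M.OSIdx → ℝ // M.IsWeight b₀ (M.post b a o h) w},
        ∑ i, (w : M.OSIdx → ℝ) i * Q (M.member b₀ i) a')
  else 0

/-- The operator `H_ŵ` induced by a weight selection `W`. -/
noncomputable def Hsel (b₀ : Belief S)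
    (W : ∀ (b : Belief S) (a : A) (o : O), 0 < M.bprO b a o → (M.OSIdx → ℝ))
    (Q : Belief S → A → ℝ) (b : Belief S) (a : A) : ℝ :=
  M.expR b a + M.γ * ∑ o, if h : 0 < M.bprO b a o then
    Finset.univ.sup' Finset.univ_nonempty (fun a' =>
      M.bprO b a o * ∑ i, W b a o h i * Q (M.member b₀ i) a')
  else 0

end POMDP

/-! The mixture weights enter `H_TIB Q (b, a)` only linearly, through `R(b,a)` and the inner sums
over `s`, while the one-step beliefs `b_{s,a,o}` do not depend on `b` at all. So for each `o` the
maximum over `a'` is a maximum of affine functions of `b`, hence convex, and convexity survives the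
nonnegative combination over `o`. A fixed point of `H_TIB` is `H_TIB Q` itself. -/

lemma Finset.sup'_add_mul_le {ι α : Type*} [Semiring α] [LinearOrder α] [IsOrderedRing α]
    {s : Finset ι} (H : s.Nonempty) (f g : ι → α) {l m : α} (hl : 0 ≤ l) (hm : 0 ≤ m) :
    s.sup' H (fun i => l * f i + m * g i) ≤ l * s.sup' H f + m * s.sup' H g :=
  Finset.sup'_le H _ fun i hi => by
    gcongr
    · exact Finset.le_sup' f hi
    · exact Finset.le_sup' g hi

lemma Belief.sum_mix_mul {S : Type*} [Fintype S] (b₁ b₂ : Belief S) (l : ℝ) (h0 : 0 ≤ l)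
    (h1 : l ≤ 1) (c : S → ℝ) :
    ∑ s, (b₁.mix b₂ l h0 h1).val s * c s =
      l * ∑ s, b₁.val s * c s + (1 - l) * ∑ s, b₂.val s * c s := by
  simp only [Belief.mix, Finset.mul_sum, ← Finset.sum_add_distrib]
  exact Finset.sum_congr rfl fun s _ => by ring

namespace POMDP

variable {S A O : Type*} [Fintype S] [Fintype A] [Fintype O] [Nonempty S] [Nonempty A]
  [Nonempty O] (M : POMDP S A O)

/-- The summand of `H_TIB` at `s` without its factor `b(s)`; the paper's restriction of the sum to
`Pr(o|s,a) > 0` becomes the value `0`. -/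
noncomputable def osbValue (Q : Belief S → A → ℝ) (s : S) (a : A) (o : O) (a' : A) : ℝ :=
  if h : 0 < M.prO s a o then M.prO s a o * Q (M.osb s a o h) a' else 0

noncomputable def tibBackup (Q : Belief S → A → ℝ) (b : Belief S) (a : A) (o : O) : ℝ :=
  univ.sup' univ_nonempty fun a' => ∑ s, b.val s * M.osbValue Q s a o a'

lemma HTIB_eq (Q : Belief S → A → ℝ) (b : Belief S) (a : A) :
    M.HTIB Q b a = M.expR b a + M.γ * ∑ o, M.tibBackup Q b a o := by
  simp only [HTIB, tibBackup, osbValue, mul_dite, mul_zero, mul_assoc]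

lemma expR_mix (b₁ b₂ : Belief S) (l : ℝ) (h0 : 0 ≤ l) (h1 : l ≤ 1) (a : A) :
    M.expR (b₁.mix b₂ l h0 h1) a = l * M.expR b₁ a + (1 - l) * M.expR b₂ a :=
  Belief.sum_mix_mul b₁ b₂ l h0 h1 _

lemma tibBackup_mix_le (Q : Belief S → A → ℝ) (b₁ b₂ : Belief S) (l : ℝ) (h0 : 0 ≤ l)
    (h1 : l ≤ 1) (a : A) (o : O) :
    M.tibBackup Q (b₁.mix b₂ l h0 h1) a o ≤
      l * M.tibBackup Q b₁ a o + (1 - l) * M.tibBackup Q b₂ a o := by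
  simp only [tibBackup, Belief.sum_mix_mul]
  exact Finset.sup'_add_mul_le _ _ _ h0 (by linarith)

lemma HTIB_convexInBelief (Q : Belief S → A → ℝ) :
    ConvexInBelief (fun b a => M.HTIB Q b a) := by
  intro a b₁ b₂ l h0 h1
  have hγ := M.γ_pos.le
  calc M.HTIB Q (b₁.mix b₂ l h0 h1) a
      ≤ (l * M.expR b₁ a + (1 - l) * M.expR b₂ a) + M.γ * ∑ o,
          (l * M.tibBackup Q b₁ a o + (1 - l) * M.tibBackup Q b₂ a o) := by
        rw [HTIB_eq, expR_mix]
        gcongr with o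
        exact M.tibBackup_mix_le Q b₁ b₂ l h0 h1 a o
    _ = l * M.HTIB Q b₁ a + (1 - l) * M.HTIB Q b₂ a := by
        simp only [HTIB_eq, Finset.sum_add_distrib, ← Finset.mul_sum]
        ring

end POMDP

/-- For any `Q`, `H_TIB Q` is convex in the belief; consequently any fixed point of `H_TIB`
is convex in the belief. -/
theorem HTIB_convex {S A O : Type*} [Fintype S] [Fintype A] [Fintype O]
    [Nonempty S] [Nonempty A] [Nonempty O] (M : POMDP S A O) :
    (∀ Q : Belief S → A → ℝ, ConvexInBelief (fun b a => M.HTIB Q b a)) ∧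
    (∀ Q : Belief S → A → ℝ, (∀ b a, Q b a = M.HTIB Q b a) → ConvexInBelief Q) := by
  refine ⟨M.HTIB_convexInBelief, fun Q hfix => ?_⟩
  have hQ : Q = fun b a => M.HTIB Q b a := funext fun b => funext (hfix b)
  rw [hQ]
  exact M.HTIB_convexInBelief Q
end

section
/- If Q : Δ(S) × A → ℝ is convex in the belief, then for every belief b ∈ Δ(S) and every a ∈ A: H_TIB Q(b,a) ≤ H_FIB Q(b,a). -/
/-!
By Jensen's inequality, a `Q` convex in the belief satisfies `Q(b', a') ≤ ∑ b'(s') Q(δ_{s'}, a')`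
for every belief `b'`. For `b' = b_{s,a,o}` and weight `b(s) Pr(o|s,a)` this bounds each term of
the TIB sum by `∑_{s'} b(s) Pr(s',o|s,a) Q(δ_{s'}, a')`, and summing over `s` gives the FIB sum
for the same `a'`; maxima over `a'` and sums over `o` preserve the inequality.
-/

open Finset
open scoped Classical

set_option linter.unusedSectionVars false

/-- `Q(·, a)` extended by `0` off the standard simplex, so that convexity in the belief becomes
`ConvexOn` and Mathlib's Jensen inequality applies. -/
noncomputable def Belief.extendToFun {S A : Type*} [Fintype S] (Q : Belief S → A → ℝ) (a : A)
    (x : S → ℝ) : ℝ :=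
  if hx : x ∈ stdSimplex ℝ S then Q ⟨x, hx.1, hx.2⟩ a else 0

lemma Belief.val_mem_stdSimplex {S : Type*} [Fintype S] (b : Belief S) :
    b.val ∈ stdSimplex ℝ S :=
  ⟨b.nonneg, b.sum_one⟩

lemma Belief.extendToFun_val {S A : Type*} [Fintype S] (Q : Belief S → A → ℝ) (a : A)
    (b : Belief S) : Belief.extendToFun Q a b.val = Q b a := by
  simp [Belief.extendToFun, b.val_mem_stdSimplex]

lemma POMDP.unit_val {S : Type*} [Fintype S] (s : S) : (POMDP.unit s).val = Pi.single s 1 := by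
  ext s'
  simp [POMDP.unit, Pi.single_apply]

lemma Belief.sum_smul_unit_val {S : Type*} [Fintype S] (b : Belief S) :
    ∑ s, b.val s • (POMDP.unit s).val = b.val := by
  simp only [POMDP.unit_val]
  ext s'
  simp [Finset.sum_apply, Pi.single_apply]

namespace ConvexInBelief

variable {S A : Type*} [Fintype S] {Q : Belief S → A → ℝ}

lemma convexOn_extendToFun (hQ : ConvexInBelief Q) (a : A) :
    ConvexOn ℝ (stdSimplex ℝ S) (Belief.extendToFun Q a) := by
  refine ⟨convex_stdSimplex ℝ S, fun x hx y hy l m hl hm hlm => ?_⟩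
  obtain rfl : m = 1 - l := by linarith
  have hmix := hQ a ⟨x, hx.1, hx.2⟩ ⟨y, hy.1, hy.2⟩ l hl (by linarith)
  have hxy : l • x + (1 - l) • y ∈ stdSimplex ℝ S :=
    convex_stdSimplex ℝ S hx hy hl hm hlm
  simp only [Belief.extendToFun, dif_pos hx, dif_pos hy, dif_pos hxy, smul_eq_mul]
  exact hmix

/-- Jensen's inequality at the vertices of the simplex. -/
lemma le_sum_mul_unit (hQ : ConvexInBelief Q) (a : A) (b : Belief S) :
    Q b a ≤ ∑ s, b.val s * Q (POMDP.unit s) a := by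
  have := (hQ.convexOn_extendToFun a).map_sum_le (t := Finset.univ)
    (fun s _ => b.nonneg s) b.sum_one (fun s _ => (POMDP.unit s).val_mem_stdSimplex)
  simpa only [b.sum_smul_unit_val, Belief.extendToFun_val, smul_eq_mul] using this

end ConvexInBelief

namespace POMDP

variable {S A O : Type*} [Fintype S] [Fintype A] [Fintype O] (M : POMDP S A O)

lemma prSO_eq_zero_of_not_prO_pos [Nonempty S] [Nonempty A] [Nonempty O] {s : S} {a : A}
    {o : O} (h : ¬ 0 < M.prO s a o) (s' : S) : M.prSO s a s' o = 0 := by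
  have hO : M.prO s a o = 0 :=
    le_antisymm (not_lt.mp h) (Finset.sum_nonneg fun s' _ => M.prSO_nonneg s a s' o)
  exact (Finset.sum_eq_zero_iff_of_nonneg fun s' _ => M.prSO_nonneg s a s' o).mp hO s'
    (Finset.mem_univ s')

lemma prO_mul_le_sum_prSO_mul [Nonempty S] [Nonempty A] [Nonempty O] {Q : Belief S → A → ℝ}
    (hQ : ConvexInBelief Q) {s : S} {a : A} {o : O} (h : 0 < M.prO s a o) (a' : A) :
    M.prO s a o * Q (M.osb s a o h) a' ≤ ∑ s', M.prSO s a s' o * Q (unit s') a' :=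
  calc M.prO s a o * Q (M.osb s a o h) a'
      ≤ M.prO s a o * ∑ s', (M.osb s a o h).val s' * Q (unit s') a' :=
        mul_le_mul_of_nonneg_left (hQ.le_sum_mul_unit a' _) h.le
    _ = ∑ s', M.prSO s a s' o * Q (unit s') a' := by
        rw [Finset.mul_sum]
        refine Finset.sum_congr rfl fun s' _ => ?_
        simp only [osb]
        field_simp

lemma sum_bprSO_mul (b : Belief S) (a : A) (o : O) (f : S → ℝ) :
    ∑ s', M.bprSO b a s' o * f s' = ∑ s, b.val s * ∑ s', M.prSO s a s' o * f s' := by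
  simp only [bprSO, Finset.sum_mul, Finset.mul_sum, mul_assoc]
  exact Finset.sum_comm

lemma sum_tib_le_sum_fib [Nonempty S] [Nonempty A] [Nonempty O] {Q : Belief S → A → ℝ}
    (hQ : ConvexInBelief Q) (b : Belief S) (a : A) (o : O) (a' : A) :
    (∑ s, if h : 0 < M.prO s a o then b.val s * M.prO s a o * Q (M.osb s a o h) a' else 0) ≤
      ∑ s', M.bprSO b a s' o * Q (unit s') a' := by
  rw [sum_bprSO_mul]
  refine Finset.sum_le_sum fun s _ => ?_
  split_ifs with h
  · rw [mul_assoc]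
    exact mul_le_mul_of_nonneg_left (M.prO_mul_le_sum_prSO_mul hQ h a') (b.nonneg s)
  · simp [M.prSO_eq_zero_of_not_prO_pos h]

end POMDP

/-- If `Q` is convex in the belief then `H_TIB Q ≤ H_FIB Q` pointwise. -/
theorem HTIB_le_HFIB {S A O : Type*} [Fintype S] [Fintype A] [Fintype O]
    [Nonempty S] [Nonempty A] [Nonempty O] (M : POMDP S A O)
    (Q : Belief S → A → ℝ) (hQ : ConvexInBelief Q) (b : Belief S) (a : A) :
    M.HTIB Q b a ≤ M.HFIB Q b a := by
  unfold POMDP.HTIB POMDP.HFIB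
  refine add_le_add_right (mul_le_mul_of_nonneg_left ?_ M.γ_pos.le) _
  exact Finset.sum_le_sum fun o _ =>
    Finset.sup'_mono_fun fun a' _ => M.sum_tib_le_sum_fib hQ b a o a'
end

section
/- Let Q_F, Q_T : Δ(S) × A → ℝ be bounded functions with Q_F = H_FIB Q_F and Q_T = H_TIB Q_T. Then for every belief b ∈ Δ(S) and every a ∈ A: Q_T(b,a) ≤ Q_F(b,a). -/
open Finset
open scoped Classical

set_option linter.unusedSectionVars false

/-!
The fixed point `Q_F` of `H_FIB` lies below the barycentric interpolation of its values at the
unit beliefs, because a maximum of a mixture is at most the mixture of the maxima. Replacing, in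
`H_TIB Q_F`, each `Q_F(b_{s,a,o}, a')` by that interpolation gives exactly the corresponding term of
`H_FIB Q_F`, so `H_TIB Q_F ≤ Q_F`. Since `H_TIB` is monotone and shifts constants by a factor `γ`,
`d = sup (Q_T - Q_F)` satisfies `d ≤ γ d`, hence `d ≤ 0`.
-/

lemma nonpos_of_forall_le_mul_of_bddAbove {ι : Type*} {f : ι → ℝ} {γ : ℝ} (hγ : γ < 1)
    (hf : BddAbove (Set.range f)) (h : ∀ d, (∀ i, f i ≤ d) → ∀ i, f i ≤ γ * d) (i : ι) :
    f i ≤ 0 := by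
  have : Nonempty ι := ⟨i⟩
  have hsup : ⨆ j, f j ≤ γ * ⨆ j, f j := ciSup_le (h _ (le_ciSup hf))
  have hsup_nonpos : ⨆ j, f j ≤ 0 := by nlinarith
  exact (le_ciSup hf i).trans hsup_nonpos

lemma Finset.sup'_sum_mul_le {ι α R : Type*} [Semiring R] [LinearOrder R] [IsOrderedRing R]
    (s : Finset ι) (t : Finset α) (ht : t.Nonempty) (w : ι → R) (hw : ∀ i ∈ s, 0 ≤ w i)
    (f : ι → α → R) :
    t.sup' ht (fun a => ∑ i ∈ s, w i * f i a) ≤ ∑ i ∈ s, w i * t.sup' ht (f i) :=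
  sup'_le _ _ fun _ ha =>
    sum_le_sum fun i hi => mul_le_mul_of_nonneg_left (le_sup' (f i) ha) (hw i hi)

namespace POMDP

variable {S A O : Type*} [Fintype S] [Fintype A] [Fintype O] (M : POMDP S A O)

lemma sum_prO (s : S) (a : A) : ∑ o, M.prO s a o = 1 := by
  simp only [prO, prSO]
  rw [sum_comm]
  simp only [← sum_mul, M.Z_sum_one, one_mul, M.T_sum_one]

lemma sum_sum_belief_prO (b : Belief S) (a : A) :
    ∑ o, ∑ s, b.val s * M.prO s a o = 1 := by
  rw [sum_comm]
  simp only [← mul_sum, sum_prO, mul_one, b.sum_one]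

section

variable [Nonempty A]

lemma HFIB_unit (Q : Belief S → A → ℝ) (s : S) (a : A) :
    M.HFIB Q (unit s) a = M.R s a + M.γ * ∑ o, univ.sup' univ_nonempty
      (fun a' => ∑ s', M.prSO s a s' o * Q (unit s') a') := by
  simp [HFIB, expR, bprSO, unit]

lemma HFIB_le_sum_unit (Q : Belief S → A → ℝ) (b : Belief S) (a : A) :
    M.HFIB Q b a ≤ ∑ s, b.val s * M.HFIB Q (unit s) a := by
  have hmix : ∀ o, univ.sup' univ_nonempty
      (fun a' => ∑ s', M.bprSO b a s' o * Q (unit s') a') ≤ ∑ s, b.val s * univ.sup'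
        univ_nonempty (fun a' => ∑ s', M.prSO s a s' o * Q (unit s') a') := fun o => by
    simp only [sum_bprSO_mul]
    exact sup'_sum_mul_le _ _ _ _ (fun s _ => b.nonneg s) _
  calc M.HFIB Q b a
      ≤ M.expR b a + M.γ * ∑ o, ∑ s, b.val s * univ.sup' univ_nonempty
          (fun a' => ∑ s', M.prSO s a s' o * Q (unit s') a') :=
        add_le_add le_rfl (mul_le_mul_of_nonneg_left (sum_le_sum fun o _ => hmix o) M.γ_pos.le)
    _ = ∑ s, b.val s * M.HFIB Q (unit s) a := by
        simp only [HFIB_unit, expR, mul_add, sum_add_distrib, mul_left_comm _ M.γ, ← mul_sum]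
        rw [sum_comm]
        simp only [mul_sum]

lemma le_sum_unit_of_isFixedPt {Q : Belief S → A → ℝ} (hQ : ∀ b a, Q b a = M.HFIB Q b a)
    (b : Belief S) (a : A) : Q b a ≤ ∑ s, b.val s * Q (unit s) a := by
  simpa only [← hQ] using M.HFIB_le_sum_unit Q b a

end

variable [Nonempty S] [Nonempty A] [Nonempty O]

lemma prO_nonneg (s : S) (a : A) (o : O) : 0 ≤ M.prO s a o :=
  sum_nonneg fun s' _ => M.prSO_nonneg s a s' o

lemma prO_eq_zero_of_not_pos {s : S} {a : A} {o : O} (h : ¬ 0 < M.prO s a o) :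
    M.prO s a o = 0 :=
  le_antisymm (not_lt.mp h) (M.prO_nonneg s a o)

lemma prSO_eq_zero_of_not_pos {s : S} {a : A} {o : O} (h : ¬ 0 < M.prO s a o) (s' : S) :
    M.prSO s a s' o = 0 :=
  (sum_eq_zero_iff_of_nonneg fun s' _ => M.prSO_nonneg s a s' o).mp
    (M.prO_eq_zero_of_not_pos h) s' (mem_univ s')

lemma prO_mul_sum_osb {s : S} {a : A} {o : O} (h : 0 < M.prO s a o) (f : S → ℝ) :
    M.prO s a o * ∑ s', (M.osb s a o h).val s' * f s' = ∑ s', M.prSO s a s' o * f s' := by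
  rw [mul_sum]
  refine sum_congr rfl fun s' _ => ?_
  simp only [osb]
  field_simp

lemma HTIB_le_HFIB {Q : Belief S → A → ℝ}
    (hQ : ∀ b a, Q b a ≤ ∑ s, b.val s * Q (unit s) a) (b : Belief S) (a : A) :
    M.HTIB Q b a ≤ M.HFIB Q b a := by
  refine add_le_add le_rfl (mul_le_mul_of_nonneg_left (sum_le_sum fun o _ => ?_) M.γ_pos.le)
  refine sup'_mono_fun fun a' _ => ?_
  rw [sum_bprSO_mul]
  refine sum_le_sum fun s _ => ?_
  split_ifs with h
  · calc b.val s * M.prO s a o * Q (M.osb s a o h) a'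
        ≤ b.val s * (M.prO s a o * ∑ s', (M.osb s a o h).val s' * Q (unit s') a') := by
          rw [← mul_assoc]
          exact mul_le_mul_of_nonneg_left (hQ _ a') (mul_nonneg (b.nonneg s) h.le)
      _ = _ := by rw [prO_mul_sum_osb]
  · simp [M.prSO_eq_zero_of_not_pos h]

lemma HTIB_le_add {Q₁ Q₂ : Belief S → A → ℝ} {d : ℝ} (h : ∀ b a, Q₁ b a ≤ Q₂ b a + d)
    (b : Belief S) (a : A) : M.HTIB Q₁ b a ≤ M.HTIB Q₂ b a + M.γ * d := by
  have hterm : ∀ o a' s, (if h : 0 < M.prO s a o then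
        b.val s * M.prO s a o * Q₁ (M.osb s a o h) a' else 0) ≤
      (if h : 0 < M.prO s a o then b.val s * M.prO s a o * Q₂ (M.osb s a o h) a' else 0) +
        b.val s * M.prO s a o * d := fun o a' s => by
    split_ifs with hpos
    · nlinarith [h (M.osb s a o hpos) a', mul_nonneg (b.nonneg s) hpos.le]
    · simp [M.prO_eq_zero_of_not_pos hpos]
  have hobs : ∀ o, univ.sup' univ_nonempty (fun a' => ∑ s, if h : 0 < M.prO s a o then
        b.val s * M.prO s a o * Q₁ (M.osb s a o h) a' else 0) ≤
      univ.sup' univ_nonempty (fun a' => ∑ s, if h : 0 < M.prO s a o then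
        b.val s * M.prO s a o * Q₂ (M.osb s a o h) a' else 0) +
        (∑ s, b.val s * M.prO s a o) * d := fun o => by
    rw [sup'_add, sum_mul]
    refine sup'_mono_fun fun a' _ => ?_
    rw [← sum_add_distrib]
    exact sum_le_sum fun s _ => hterm o a' s
  have htotal := sum_le_sum fun o (_ : o ∈ univ) => hobs o
  rw [sum_add_distrib, ← sum_mul, sum_sum_belief_prO, one_mul] at htotal
  simp only [HTIB]
  nlinarith [M.γ_pos]

end POMDP

/-- The tighter informed bound is at least as tight as the fast informed bound:
bounded fixed points satisfy `Q_TIB ≤ Q_FIB` pointwise. -/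
theorem QTIB_le_QFIB {S A O : Type*} [Fintype S] [Fintype A] [Fintype O]
    [Nonempty S] [Nonempty A] [Nonempty O] (M : POMDP S A O)
    (QF QT : Belief S → A → ℝ)
    (hQFbdd : ∃ C : ℝ, ∀ b a, |QF b a| ≤ C) (hQTbdd : ∃ C : ℝ, ∀ b a, |QT b a| ≤ C)
    (hQF : ∀ b a, QF b a = M.HFIB QF b a) (hQT : ∀ b a, QT b a = M.HTIB QT b a)
    (b : Belief S) (a : A) :
    QT b a ≤ QF b a := by
  obtain ⟨CF, hCF⟩ := hQFbdd
  obtain ⟨CT, hCT⟩ := hQTbdd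
  have hbdd : BddAbove (Set.range fun p : Belief S × A => QT p.1 p.2 - QF p.1 p.2) := by
    refine ⟨CT + CF, ?_⟩
    rintro _ ⟨⟨b', a'⟩, rfl⟩
    linarith [(abs_le.mp (hCT b' a')).2, (abs_le.mp (hCF b' a')).1]
  have hcontract : ∀ d, (∀ p : Belief S × A, QT p.1 p.2 - QF p.1 p.2 ≤ d) →
      ∀ p : Belief S × A, QT p.1 p.2 - QF p.1 p.2 ≤ M.γ * d := by
    rintro d hd ⟨b', a'⟩
    have hshift := M.HTIB_le_add (Q₁ := QT) (Q₂ := QF) (fun b a => by linarith [hd (b, a)]) b' a'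
    have hTIB := M.HTIB_le_HFIB (M.le_sum_unit_of_isFixedPt hQF) b' a'
    linarith [hQT b' a', hQF b' a']
  linarith [nonpos_of_forall_le_mul_of_bddAbove M.γ_lt_one hbdd hcontract (b, a)]
end

section
/- Let b, b' be beliefs, λ ∈ [0,1], and b'' = λb + (1−λ)b'. Let a ∈ A and o ∈ O with Pr(o|b,a) > 0 and Pr(o|b',a) > 0; then Pr(o|b'',a) = λ·Pr(o|b,a) + (1−λ)·Pr(o|b',a) > 0, and if w ∈ W_{b,a,o} and w' ∈ W_{b',a,o}, then the map w'' defined on B_SAO by w''(b̃) = (λ·Pr(o|b,a)·w(b̃) + (1−λ)·Pr(o|b',a)·w'(b̃)) / Pr(o|b'',a) belongs to W_{b'',a,o}, i.e., w'' is a weight function for the posterior belief b_{b'',a,o} over B_SAO. -/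
open Finset
open scoped Classical

set_option linter.unusedSectionVars false

/-! Since `Pr(·,o|b,a)` is linear in `b`, the unnormalised weights `Pr(o|b,a) · w` of the
unnormalised posterior mix linearly; dividing by `Pr(o|b'',a)` turns them into weights for the
posterior `b_{b'',a,o}`. -/

namespace POMDP

variable {S A O : Type*} [Fintype S] [Fintype A] [Fintype O] [Nonempty S] [Nonempty A]
  [Nonempty O] (M : POMDP S A O)

lemma bprSO_mix (b b' : Belief S) (l : ℝ) (h0 : 0 ≤ l) (h1 : l ≤ 1) (a : A) (s' : S) (o : O) :
    M.bprSO (b.mix b' l h0 h1) a s' o = l * M.bprSO b a s' o + (1 - l) * M.bprSO b' a s' o := by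
  simp only [bprSO, Belief.mix, Finset.mul_sum, ← Finset.sum_add_distrib]
  exact Finset.sum_congr rfl fun s _ => by ring

lemma bprO_mix (b b' : Belief S) (l : ℝ) (h0 : 0 ≤ l) (h1 : l ≤ 1) (a : A) (o : O) :
    M.bprO (b.mix b' l h0 h1) a o = l * M.bprO b a o + (1 - l) * M.bprO b' a o := by
  simp only [bprO, bprSO_mix, Finset.mul_sum, ← Finset.sum_add_distrib]

lemma bprO_mix_pos {b b' : Belief S} {l : ℝ} (h0 : 0 ≤ l) (h1 : l ≤ 1) {a : A} {o : O}
    (hb : 0 < M.bprO b a o) (hb' : 0 < M.bprO b' a o) :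
    0 < M.bprO (b.mix b' l h0 h1) a o := by
  rw [bprO_mix]
  exact convex_Ioi (0 : ℝ) hb hb' h0 (sub_nonneg.mpr h1) (add_sub_cancel l 1)

lemma IsWeight.bprO_mul_sum {b₀ b : Belief S} {a : A} {o : O} {hb : 0 < M.bprO b a o}
    {w : M.OSIdx → ℝ} (hw : M.IsWeight b₀ (M.post b a o hb) w) (s' : S) :
    M.bprO b a o * ∑ i, w i * (M.member b₀ i).val s' = M.bprSO b a s' o := by
  rw [hw.2 s', post, mul_div_cancel₀ _ hb.ne']

lemma isWeight_post_of_sum_eq_bprSO (b₀ : Belief S) {b : Belief S} {a : A} {o : O}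
    (hb : 0 < M.bprO b a o) {v : M.OSIdx → ℝ} (hv : ∀ i, 0 ≤ v i)
    (hsum : ∀ s', ∑ i, v i * (M.member b₀ i).val s' = M.bprSO b a s' o) :
    M.IsWeight b₀ (M.post b a o hb) (fun i => v i / M.bprO b a o) := by
  refine ⟨fun i => div_nonneg (hv i) hb.le, fun s' => ?_⟩
  simp only [div_mul_eq_mul_div, ← Finset.sum_div, hsum, post]

end POMDP

/-- Mixing weight functions: if `b'' = λ·b + (1-λ)·b'` with `Pr(o|b,a) > 0` and
`Pr(o|b',a) > 0`, then `Pr(o|b'',a) = λ·Pr(o|b,a) + (1-λ)·Pr(o|b',a) > 0`, and the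
corresponding mixture of weight functions for `b_{b,a,o}` and `b_{b',a,o}` is a weight
function for `b_{b'',a,o}` over `B_SAO`. -/
theorem mix_weight {S A O : Type*} [Fintype S] [Fintype A] [Fintype O]
    [Nonempty S] [Nonempty A] [Nonempty O] (M : POMDP S A O) (b₀ : Belief S)
    (b b' : Belief S) (l : ℝ) (h0 : 0 ≤ l) (h1 : l ≤ 1) (a : A) (o : O)
    (hb : 0 < M.bprO b a o) (hb' : 0 < M.bprO b' a o)
    (w w' : M.OSIdx → ℝ)
    (hw : M.IsWeight b₀ (M.post b a o hb) w)
    (hw' : M.IsWeight b₀ (M.post b' a o hb') w') :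
    M.bprO (Belief.mix b b' l h0 h1) a o = l * M.bprO b a o + (1 - l) * M.bprO b' a o ∧
    ∃ hpos : 0 < M.bprO (Belief.mix b b' l h0 h1) a o,
      M.IsWeight b₀ (M.post (Belief.mix b b' l h0 h1) a o hpos) (fun i =>
        (l * M.bprO b a o * w i + (1 - l) * M.bprO b' a o * w' i)
          / M.bprO (Belief.mix b b' l h0 h1) a o) := by
  refine ⟨M.bprO_mix b b' l h0 h1 a o, M.bprO_mix_pos h0 h1 hb hb', ?_⟩
  refine M.isWeight_post_of_sum_eq_bprSO b₀ _ (fun i => ?_) (fun s' => ?_)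
  · have hl' : 0 ≤ 1 - l := sub_nonneg.mpr h1
    have := hw.1 i
    have := hw'.1 i
    positivity
  · simp only [add_mul, Finset.sum_add_distrib, mul_assoc, ← Finset.mul_sum, POMDP.bprSO_mix,
      hw.bprO_mul_sum, hw'.bprO_mul_sum]
end

section
/- Let ŵ be any weight selection. Then for all functions Q, Q' : Δ(S) × A → ℝ, every constant C ≥ 0 such that |Q(b',a') − Q'(b',a')| ≤ C for every belief b' ∈ Δ(S) and every a' ∈ A, every belief b ∈ Δ(S) and every a ∈ A: |H_ŵ Q(b,a) − H_ŵ Q'(b,a)| ≤ γ·C. In particular H_ŵ (and hence the entropy-based tighter informed bound operator H_EBIB) is a contraction with Lipschitz constant γ with respect to the supremum norm on bounded functions Δ(S) × A → ℝ. -/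
open Finset
open scoped Classical

set_option linter.unusedSectionVars false

/-!
Each observation term of `H_ŵ` is a maximum over `a'` of `Pr(o|b,a)` times a convex combination
of values of `Q` (the weights sum to one since every member of `B_SAO` is a distribution). Replacing
`Q` by `Q'` moves each combination, hence each maximum, by at most `Pr(o|b,a) · C`, and the
probabilities `Pr(o|b,a)` sum to one.
-/

theorem Finset.abs_sup'_sub_sup'_le {ι α : Type*} [AddCommGroup α] [LinearOrder α]
    [IsOrderedAddMonoid α] {s : Finset ι} (hs : s.Nonempty) {f g : ι → α} {c : α}
    (hfg : ∀ i ∈ s, |f i - g i| ≤ c) : |s.sup' hs f - s.sup' hs g| ≤ c := by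
  have hle {f g : ι → α} (hfg : ∀ i ∈ s, |f i - g i| ≤ c) : s.sup' hs f ≤ c + s.sup' hs g :=
    sup'_le _ _ fun i hi => (sub_le_iff_le_add.1 ((le_abs_self _).trans (hfg i hi))).trans
      (add_le_add_right (le_sup' g hi) c)
  exact abs_sub_le_iff.2 ⟨sub_le_iff_le_add.2 (hle hfg),
    sub_le_iff_le_add.2 (hle fun i hi => abs_sub_comm (g i) (f i) ▸ hfg i hi)⟩

theorem Finset.abs_sum_mul_sub_sum_mul_le {ι : Type*} (s : Finset ι) {w f g : ι → ℝ} {c : ℝ}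
    (hw : ∀ i ∈ s, 0 ≤ w i) (hfg : ∀ i ∈ s, |f i - g i| ≤ c) :
    |∑ i ∈ s, w i * f i - ∑ i ∈ s, w i * g i| ≤ (∑ i ∈ s, w i) * c := by
  rw [← sum_sub_distrib, sum_mul]
  refine (abs_sum_le_sum_abs _ _).trans (sum_le_sum fun i hi => ?_)
  rw [← mul_sub, abs_mul, abs_of_nonneg (hw i hi)]
  exact mul_le_mul_of_nonneg_left (hfg i hi) (hw i hi)

namespace POMDP

variable {S A O : Type*} [Fintype S] [Fintype A] [Fintype O] (M : POMDP S A O)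

theorem sum_bprO (b : Belief S) (a : A) : ∑ o, M.bprO b a o = 1 := by
  have hZT (s s' : S) : ∑ o, M.prSO s a s' o = M.T s a s' := by
    simp only [prSO, ← sum_mul, M.Z_sum_one, one_mul]
  calc ∑ o, M.bprO b a o = ∑ s, b.val s * ∑ s', ∑ o, M.prSO s a s' o := by
        simp only [bprO, bprSO, mul_sum]
        rw [sum_comm, sum_congr rfl fun _ _ => sum_comm, sum_comm]
    _ = 1 := by simp only [hZT, M.T_sum_one, mul_one, b.sum_one]

variable [Nonempty S] [Nonempty A] [Nonempty O]

theorem bprO_nonneg (b : Belief S) (a : A) (o : O) : 0 ≤ M.bprO b a o :=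
  sum_nonneg fun s' _ => M.bprSO_nonneg b a s' o

variable {M}

theorem IsWeight.sum_eq_one {b₀ tgt : Belief S} {w : M.OSIdx → ℝ} (hw : M.IsWeight b₀ tgt w) :
    ∑ i, w i = 1 := by
  calc ∑ i, w i = ∑ s, ∑ i, w i * (M.member b₀ i).val s := by
        simp only [sum_comm (s := univ (α := S)), ← mul_sum, (M.member b₀ _).sum_one, mul_one]
    _ = 1 := by simp only [hw.2, tgt.sum_one]

theorem IsWeight.abs_sum_mul_sub_sum_mul_le {b₀ tgt : Belief S} {w : M.OSIdx → ℝ}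
    (hw : M.IsWeight b₀ tgt w) {Q Q' : Belief S → A → ℝ} {C : ℝ}
    (hQ : ∀ b' a', |Q b' a' - Q' b' a'| ≤ C) (a' : A) :
    |∑ i, w i * Q (M.member b₀ i) a' - ∑ i, w i * Q' (M.member b₀ i) a'| ≤ C := by
  simpa only [hw.sum_eq_one, one_mul] using
    Finset.abs_sum_mul_sub_sum_mul_le univ (fun i _ => hw.1 i) fun i _ => hQ (M.member b₀ i) a'

end POMDP

theorem Hsel_contraction_general {S A O : Type*} [Fintype S] [Fintype A] [Fintype O]
    [Nonempty S] [Nonempty A] [Nonempty O] (M : POMDP S A O) (b₀ : Belief S)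
    (W : ∀ (b : Belief S) (a : A) (o : O), 0 < M.bprO b a o → (M.OSIdx → ℝ))
    (hW : ∀ b a o (h : 0 < M.bprO b a o), M.IsWeight b₀ (M.post b a o h) (W b a o h))
    (Q Q' : Belief S → A → ℝ) (C : ℝ)
    (h : ∀ (b' : Belief S) (a' : A), |Q b' a' - Q' b' a'| ≤ C)
    (b : Belief S) (a : A) :
    |M.Hsel b₀ W Q b a - M.Hsel b₀ W Q' b a| ≤ M.γ * C := by
  unfold POMDP.Hsel
  rw [add_sub_add_left_eq_sub, ← mul_sub, abs_mul, abs_of_pos M.γ_pos, ← sum_sub_distrib]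
  refine mul_le_mul_of_nonneg_left ?_ M.γ_pos.le
  calc |∑ o, _| ≤ ∑ o, |_| := abs_sum_le_sum_abs _ _
    _ ≤ ∑ o, M.bprO b a o * C := sum_le_sum fun o _ => ?_
    _ = C := by rw [← sum_mul, M.sum_bprO, one_mul]
  split_ifs with ho
  · refine abs_sup'_sub_sup'_le _ fun a' _ => ?_
    rw [← mul_sub, abs_mul, abs_of_pos ho]
    exact mul_le_mul_of_nonneg_left ((hW b a o ho).abs_sum_mul_sub_sum_mul_le h a') ho.le
  · simp [le_antisymm (not_lt.1 ho) (M.bprO_nonneg b a o)]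

/-- For any weight selection `W`, the induced operator `H_ŵ` (in particular `H_EBIB`)
contracts sup-distance by a factor `γ`. -/
theorem Hsel_contraction {S A O : Type*} [Fintype S] [Fintype A] [Fintype O]
    [Nonempty S] [Nonempty A] [Nonempty O] (M : POMDP S A O) (b₀ : Belief S)
    (W : ∀ (b : Belief S) (a : A) (o : O), 0 < M.bprO b a o → (M.OSIdx → ℝ))
    (hW : ∀ b a o (h : 0 < M.bprO b a o), M.IsWeight b₀ (M.post b a o h) (W b a o h))
    (Q Q' : Belief S → A → ℝ) (C : ℝ) (hC : 0 ≤ C)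
    (h : ∀ (b' : Belief S) (a' : A), |Q b' a' - Q' b' a'| ≤ C)
    (b : Belief S) (a : A) :
    |M.Hsel b₀ W Q b a - M.Hsel b₀ W Q' b a| ≤ M.γ * C :=
  Hsel_contraction_general M b₀ W hW Q Q' C h b a
end
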